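/- Let C ∈ ℝ^{n×m}, a ∈ ℝ^n, b ∈ ℝ^m and λ > 0. The zero matrix minimizes the ℓ2-penalized unbalanced optimal transport objective F_λ over all nonnegative matrices if and only if C_{i,j} ≥ λ·(a_i + b_j) for every pair (i, j). Consequently, the regularization path is identically zero for all λ ≤ min_{i,j} C_{i,j}/(a_i + b_j) when a and b are nonnegative. -/

import Mathlib

open Finset

/-- The ℓ2-penalized unbalanced optimal transport objective. -/
noncomputable def FobjL2 {n m : ℕ} (C : Matrix (Fin n) (Fin m) ℝ)
    (a : Fin n → ℝ) (b : Fin m → ℝ) (lam : ℝ)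
    (T : Matrix (Fin n) (Fin m) ℝ) : ℝ :=
  (∑ i, ∑ j, C i j * T i j)
    + lam / 2 * ∑ i, ((∑ j, T i j) - a i) ^ 2
    + lam / 2 * ∑ j, ((∑ i, T i j) - b j) ^ 2

lemma l2_uot_suff {n m : ℕ} (C : Matrix (Fin n) (Fin m) ℝ)
    (a : Fin n → ℝ) (b : Fin m → ℝ) (lam : ℝ) (hlam : 0 < lam)
    (h : ∀ i j, lam * (a i + b j) ≤ C i j)
    (T : Matrix (Fin n) (Fin m) ℝ) (hT : ∀ i j, 0 ≤ T i j) :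
    FobjL2 C a b lam 0 ≤ FobjL2 C a b lam T := by
  unfold FobjL2
  simp only [Matrix.zero_apply, mul_zero, Finset.sum_const_zero, zero_sub, neg_sq, zero_add]
  have hA : ∑ i, ∑ j, lam * (a i + b j) * T i j ≤ ∑ i, ∑ j, C i j * T i j := by
    apply Finset.sum_le_sum
    intro i _
    apply Finset.sum_le_sum
    intro j _
    exact mul_le_mul_of_nonneg_right (h i j) (hT i j)
  have hB : ∑ i, ∑ j, lam * (a i + b j) * T i j
      = lam * ∑ i, a i * ∑ j, T i j + lam * ∑ j, b j * ∑ i, T i j := by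
    have e1 : ∑ i, ∑ j, lam * (a i + b j) * T i j
        = ∑ i, ∑ j, (lam * a i * T i j + lam * b j * T i j) := by
      refine Finset.sum_congr rfl fun i _ => Finset.sum_congr rfl fun j _ => by ring
    rw [e1]
    simp only [Finset.sum_add_distrib]
    congr 1
    · rw [Finset.mul_sum]
      refine Finset.sum_congr rfl fun i _ => by simp [Finset.mul_sum, mul_assoc]
    · rw [Finset.sum_comm, Finset.mul_sum]
      refine Finset.sum_congr rfl fun j _ => by simp [Finset.mul_sum, mul_assoc]
  have hC : lam / 2 * ∑ i, (a i)^2 - lam * ∑ i, a i * ∑ j, T i j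
      ≤ lam / 2 * ∑ i, ((∑ j, T i j) - a i)^2 := by
    rw [Finset.mul_sum, Finset.mul_sum, Finset.mul_sum, ← Finset.sum_sub_distrib]
    gcongr with i _
    nlinarith [sq_nonneg (∑ j, T i j), hlam]
  have hD : lam / 2 * ∑ j, (b j)^2 - lam * ∑ j, b j * ∑ i, T i j
      ≤ lam / 2 * ∑ j, ((∑ i, T i j) - b j)^2 := by
    rw [Finset.mul_sum, Finset.mul_sum, Finset.mul_sum, ← Finset.sum_sub_distrib]
    gcongr with j _
    nlinarith [sq_nonneg (∑ i, T i j), hlam]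
  linarith

/-- The zero matrix minimizes the ℓ2-penalized UOT objective over nonnegative
matrices iff `C_{i,j} ≥ λ(a_i + b_j)` for all `(i,j)`. Consequently, for
nonnegative `a` and `b`, the regularization path is identically zero for all
`λ ≤ min_{i,j} C_{i,j}/(a_i + b_j)`. -/
theorem l2_uot_zero_plan {n m : ℕ} (C : Matrix (Fin n) (Fin m) ℝ)
    (a : Fin n → ℝ) (b : Fin m → ℝ) (lam : ℝ) (hlam : 0 < lam) :
    ((∀ T : Matrix (Fin n) (Fin m) ℝ, (∀ i j, 0 ≤ T i j) →
        FobjL2 C a b lam 0 ≤ FobjL2 C a b lam T)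
      ↔ ∀ i j, lam * (a i + b j) ≤ C i j)
    ∧ ((∀ i, 0 ≤ a i) → (∀ j, 0 ≤ b j) →
        lam ≤ ⨅ p : Fin n × Fin m, C p.1 p.2 / (a p.1 + b p.2) →
        ∀ T : Matrix (Fin n) (Fin m) ℝ, (∀ i j, 0 ≤ T i j) →
          FobjL2 C a b lam 0 ≤ FobjL2 C a b lam T) := by
  have main : ∀ i j, lam * (a i + b j) ≤ C i j → True := fun _ _ _ => trivial
  constructor
  · constructor
    · -- necessity
      intro hmin i j
      by_contra hc
      push_neg at hc
      set d : ℝ := lam * (a i + b j) - C i j with hd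
      have hdpos : 0 < d := by linarith
      set t : ℝ := d / (2 * lam) with ht
      have htpos : 0 < t := by positivity
      set T : Matrix (Fin n) (Fin m) ℝ :=
        fun i' j' => if i' = i ∧ j' = j then t else 0 with hTdef
      have hTnn : ∀ i' j', 0 ≤ T i' j' := by
        intro i' j'
        simp only [hTdef]
        split
        · exact le_of_lt htpos
        · exact le_refl 0
      have hle := hmin T hTnn
      have hsum1 : ∑ i', ∑ j', C i' j' * T i' j' = C i j * t := by
        rw [Finset.sum_eq_single i]
        · rw [Finset.sum_eq_single j]
          · simp [hTdef]
          · intro j' _ hj'; simp [hTdef, hj']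
          · simp
        · intro i' _ hi'
          apply Finset.sum_eq_zero
          intro j' _
          simp [hTdef, hi']
        · simp
      have hrowsum : ∀ i', (∑ j', T i' j') = if i' = i then t else 0 := by
        intro i'
        by_cases hi' : i' = i
        · subst hi'
          simp [hTdef, Finset.sum_ite_eq' Finset.univ j (fun _ => t)]
        · simp [hTdef, hi']
      have hcolsum : ∀ j', (∑ i', T i' j') = if j' = j then t else 0 := by
        intro j'
        by_cases hj' : j' = j
        · subst hj'
          simp [hTdef, Finset.sum_ite_eq' Finset.univ i (fun _ => t)]
        · simp [hTdef, hj']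
      have hrow : (∑ i', ((∑ j', T i' j') - a i')^2) - (∑ i', ((0:ℝ) - a i')^2)
          = (t - a i)^2 - (a i)^2 := by
        rw [← Finset.sum_sub_distrib]
        rw [Finset.sum_eq_single i]
        · rw [hrowsum i]; simp
        · intro i' _ hi'; rw [hrowsum i']; simp [hi']
        · simp
      have hcol : (∑ j', ((∑ i', T i' j') - b j')^2) - (∑ j', ((0:ℝ) - b j')^2)
          = (t - b j)^2 - (b j)^2 := by
        rw [← Finset.sum_sub_distrib]
        rw [Finset.sum_eq_single j]
        · rw [hcolsum j]; simp
        · intro j' _ hj'; rw [hcolsum j']; simp [hj']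
        · simp
      have hexp : FobjL2 C a b lam T - FobjL2 C a b lam 0
          = C i j * t + lam/2 * ((t - a i)^2 - (a i)^2) + lam/2 * ((t - b j)^2 - (b j)^2) := by
        unfold FobjL2
        simp only [Matrix.zero_apply, mul_zero, Finset.sum_const_zero]
        rw [hsum1]
        have := hrow
        have := hcol
        nlinarith [hrow, hcol]
      have hval : C i j * t + lam/2 * ((t - a i)^2 - (a i)^2) + lam/2 * ((t - b j)^2 - (b j)^2)
          = t * (C i j - lam * (a i + b j)) + lam * t^2 := by ring
      have htval : t * (C i j - lam * (a i + b j)) + lam * t^2 < 0 := by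
        have hl : lam ≠ 0 := hlam.ne'
        have h2 : lam * t = d / 2 := by rw [ht]; field_simp
        have hcd : C i j - lam * (a i + b j) = -d := by rw [hd]; ring
        have heq2 : t * (C i j - lam * (a i + b j)) + lam * t ^ 2 = -(t * d) / 2 := by
          rw [hcd]; linear_combination t * h2
        rw [heq2]
        nlinarith [mul_pos htpos hdpos]
      linarith [hle, hexp, hval]
    · intro h T hT
      exact l2_uot_suff C a b lam hlam h T hT
  · intro ha hb hlaminf T hT
    apply l2_uot_suff C a b lam hlam _ T hT
    intro i j
    have hinf : (⨅ p : Fin n × Fin m, C p.1 p.2 / (a p.1 + b p.2)) ≤ C i j / (a i + b j) := by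
      exact ciInf_le (Set.Finite.bddBelow (Set.finite_range _)) (⟨i, j⟩ : Fin n × Fin m)
    have hle : lam ≤ C i j / (a i + b j) := le_trans hlaminf hinf
    have hab : 0 ≤ a i + b j := by have := ha i; have := hb j; linarith
    rcases eq_or_lt_of_le hab with heq | hpos
    · rw [← heq] at hle ⊢
      simp at hle
      linarith
    · rw [le_div_iff₀ hpos] at hle
      linarith [hle]
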